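/- arXiv:2109.06911 — 4 statements merged into one kernel-verified Lean document; each statement's English description precedes it below -/
import Mathlib

section
/- Let (a_T) be a sequence of positive reals with a_T/T → r for some fixed r > 0. For any sequence of maps x̂_{KL,T} : 𝒫 → 𝒳 with x̂_{KL,T}(P) ∈ argmin_{x∈𝒳} ĉ_KL(x,P,T) for all P and T, the pair (ĉ_KL, x̂_KL) satisfies the prescription out-of-sample guarantee: limsup_{T→∞} (1/a_T)·log ℙ^∞( c(x̂_{KL,T}(P̂_T),P) > ĉ_KL*(P̂_T,T) ) ≤ −1 for every P ∈ 𝒫°, where ĉ_KL*(P,T) := min_{x∈𝒳} ĉ_KL(x,P,T). -/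
open Filter Asymptotics

namespace DDO

/-- The probability simplex `𝒫` over the scenario set `Σ = Fin d`. -/
def simplex (d : ℕ) : Set (Fin d → ℝ) :=
  {P | (∀ i, 0 ≤ P i) ∧ ∑ i, P i = 1}

/-- The relative interior `𝒫°` of the probability simplex. -/
def simplexInt (d : ℕ) : Set (Fin d → ℝ) :=
  {P | (∀ i, 0 < P i) ∧ ∑ i, P i = 1}

/-- Expected cost `c(x, P) = ∑ i, ℓ(x, i) · P(i)` (extended linearly to `ℝ^d`). -/
noncomputable def cost {X : Type*} {d : ℕ} (ℓ : X → Fin d → ℝ) (x : X)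
    (P : Fin d → ℝ) : ℝ :=
  ∑ i, ℓ x i * P i

/-- Variance `Var_P(ℓ(x, ξ))` of the loss under `P`. -/
noncomputable def varLoss {X : Type*} {d : ℕ} (ℓ : X → Fin d → ℝ) (x : X)
    (P : Fin d → ℝ) : ℝ :=
  (∑ i, ℓ x i ^ 2 * P i) - cost ℓ x P ^ 2

/-- Empirical distribution `P̂_T` of the `T` samples `ω`. -/
noncomputable def empDist {d T : ℕ} (ω : Fin T → Fin d) : Fin d → ℝ :=
  fun i => ((Finset.univ.filter (fun t => ω t = i)).card : ℝ) / (T : ℝ)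

open Classical in
/-- `ℙ^∞(A)`: the probability, under i.i.d. sampling from `P`, of an event `A`
depending on the first `T` samples. -/
noncomputable def probT {d : ℕ} (P : Fin d → ℝ) (T : ℕ)
    (A : (Fin T → Fin d) → Prop) : ℝ :=
  ∑ ω : Fin T → Fin d, if A ω then ∏ t, P (ω t) else 0

/-- Regular predictors (the class `𝒞`): uniformly bounded, equicontinuous,
differentiable in the distribution argument (in the Fréchet sense along the simplex),
with uniformly bounded and equicontinuous derivatives. -/
structure IsRegularPredictor {X : Type*} [MetricSpace X] (d : ℕ)
    (chat : X → (Fin d → ℝ) → ℕ → ℝ) : Prop where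
  unifBounded : ∃ K : ℝ, ∀ (T : ℕ) (x : X), ∀ P ∈ simplex d, |chat x P T| ≤ K
  equicontinuous : ∀ (x : X), ∀ P ∈ simplex d, ∀ ε > (0 : ℝ), ∃ δ > (0 : ℝ),
    ∀ (T : ℕ) (x' : X), ∀ P' ∈ simplex d,
      dist x x' < δ → dist P P' < δ → |chat x P T - chat x' P' T| < ε
  differentiableDeriv : ∃ D : X → (Fin d → ℝ) → ℕ → ((Fin d → ℝ) →L[ℝ] ℝ),
    (∀ (T : ℕ) (x : X), ∀ P ∈ simplex d,
      HasFDerivWithinAt (fun Q => chat x Q T) (D x P T) (simplex d) P) ∧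
    (∃ K : ℝ, ∀ (T : ℕ) (x : X), ∀ P ∈ simplex d, ‖D x P T‖ ≤ K) ∧
    (∀ (x : X), ∀ P ∈ simplex d, ∀ ε > (0 : ℝ), ∃ δ > (0 : ℝ),
      ∀ (T : ℕ) (x' : X), ∀ P' ∈ simplex d,
        dist x x' < δ → dist P P' < δ → ‖D x P T - D x' P' T‖ < ε)

/-- The out-of-sample guarantee at speed `(a_T)`:
`limsup_{T→∞} (1/a_T) · log ℙ^∞( c(x,P) > ĉ(x, P̂_T, T) ) ≤ -1`
for every `x ∈ 𝒳` and `P ∈ 𝒫°`, stated in the equivalent ε-eventual form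
`ℙ^∞(disappointment) ≤ exp((-1+ε) a_T)` eventually (which in particular permits a
disappointment probability equal to zero). -/
def OOSGuarantee {X : Type*} {d : ℕ} (ℓ : X → Fin d → ℝ) (a : ℕ → ℝ)
    (chat : X → (Fin d → ℝ) → ℕ → ℝ) : Prop :=
  ∀ (x : X), ∀ P ∈ simplexInt d, ∀ ε > (0 : ℝ), ∀ᶠ T : ℕ in atTop,
    probT P T (fun ω => cost ℓ x P > chat x (empDist ω) T) ≤
      Real.exp ((-1 + ε) * a T)

/-- The prediction error `|ĉ(x,P,T) - c(x,P)|`. -/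
noncomputable def predErr {X : Type*} {d : ℕ} (ℓ : X → Fin d → ℝ)
    (chat : X → (Fin d → ℝ) → ℕ → ℝ) (x : X) (P : Fin d → ℝ) (T : ℕ) : ℝ :=
  |chat x P T - cost ℓ x P|

open Classical in
/-- Ratio with the convention `0 / 0 = 1`. -/
noncomputable def ratio (u v : ℝ) : ℝ := if u = 0 ∧ v = 0 then 1 else u / v

/-- The partial order `⪯_𝒞` on predictors:
`limsup_{T→∞} |ĉ₁(x,P,T) - c(x,P)| / |ĉ₂(x,P,T) - c(x,P)| ≤ 1`
(convention `0/0 = 1`) for every `x ∈ 𝒳`, `P ∈ 𝒫°`, stated in the equivalent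
ε-eventual form (the ratio is a nonnegative sequence). -/
def PredOrder {X : Type*} {d : ℕ} (ℓ : X → Fin d → ℝ)
    (chat1 chat2 : X → (Fin d → ℝ) → ℕ → ℝ) : Prop :=
  ∀ (x : X), ∀ P ∈ simplexInt d, ∀ ε > (0 : ℝ), ∀ᶠ T : ℕ in atTop,
    ratio (predErr ℓ chat1 x P T) (predErr ℓ chat2 x P T) ≤ 1 + ε

/-- The equivalence `≡` on predictors: `|ĉ₁ - c|` and `|ĉ₂ - c|` are asymptotically
equivalent as `T → ∞` for every `x ∈ 𝒳` and `P ∈ 𝒫°`. -/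
def PredEquiv {X : Type*} {d : ℕ} (ℓ : X → Fin d → ℝ)
    (chat1 chat2 : X → (Fin d → ℝ) → ℕ → ℝ) : Prop :=
  ∀ (x : X), ∀ P ∈ simplexInt d,
    (fun T : ℕ => predErr ℓ chat1 x P T) ~[atTop]
      (fun T : ℕ => predErr ℓ chat2 x P T)

/-- A single term `q · log(q/p)` of the relative entropy, with the conventions
`0 · log(0/p) = 0` and `q · log(q/0) = ∞` for `q > 0`. -/
noncomputable def klTerm (q p : ℝ) : EReal :=
  if q = 0 then 0 else if p = 0 then ⊤ else ((q * Real.log (q / p) : ℝ) : EReal)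

/-- The relative entropy (KL divergence) `I(Q, P')`. -/
noncomputable def relEnt {d : ℕ} (Q P' : Fin d → ℝ) : EReal :=
  ∑ i, klTerm (Q i) (P' i)

/-- The KL-DRO predictor with radius `r`:
`ĉ_KL(x,P) = sup { c(x,P') : P' ∈ 𝒫, I(P,P') ≤ r }`. -/
noncomputable def cKL {X : Type*} {d : ℕ} (ℓ : X → Fin d → ℝ) (r : ℝ)
    (x : X) (P : Fin d → ℝ) : ℝ :=
  sSup {y | ∃ P' ∈ simplex d, relEnt P P' ≤ (r : EReal) ∧ y = cost ℓ x P'}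

/-- The robust predictor `ĉ_R(x) = max_{i ∈ Σ} ℓ(x,i)`. -/
noncomputable def cR {X : Type*} {d : ℕ} (ℓ : X → Fin d → ℝ) (x : X) : ℝ :=
  ⨆ i : Fin d, ℓ x i

/-- The sample variance penalization (SVP) predictor
`ĉ_V(x,P,T) = c(x,P) + √((2 a_T / T) · Var_P(ℓ(x,ξ)))`. -/
noncomputable def cV {X : Type*} {d : ℕ} (a : ℕ → ℝ) (ℓ : X → Fin d → ℝ)
    (x : X) (P : Fin d → ℝ) (T : ℕ) : ℝ :=
  cost ℓ x P + Real.sqrt ((2 * a T / (T : ℝ)) * varLoss ℓ x P)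

/-- The squared local ellipsoid norm `‖Δ‖_P² = (1/2) ∑ i, Δ_i² / P(i)`. -/
noncomputable def ellNormSq {d : ℕ} (P Δ : Fin d → ℝ) : ℝ :=
  (1 / 2) * ∑ i, Δ i ^ 2 / P i

/-- The optimal cost `c*(P) = min_{x ∈ 𝒳} c(x,P)`. -/
noncomputable def cstar {X : Type*} {d : ℕ} (ℓ : X → Fin d → ℝ)
    (P : Fin d → ℝ) : ℝ :=
  sInf (Set.range fun x : X => cost ℓ x P)

/-- The optimal predicted cost `ĉ*(P,T) = min_{x ∈ 𝒳} ĉ(x,P,T)`. -/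
noncomputable def chatStar {X : Type*} {d : ℕ} (chat : X → (Fin d → ℝ) → ℕ → ℝ)
    (P : Fin d → ℝ) (T : ℕ) : ℝ :=
  sInf (Set.range fun x : X => chat x P T)

/-- `x̂` is a prescriptor associated with the predictor `ĉ`:
`x̂_T(P) ∈ argmin_{x ∈ 𝒳} ĉ(x,P,T)` for all `P ∈ 𝒫` and `T`. -/
def IsPrescriptor {X : Type*} {d : ℕ} (chat : X → (Fin d → ℝ) → ℕ → ℝ)
    (xhat : ℕ → (Fin d → ℝ) → X) : Prop :=
  ∀ (T : ℕ), ∀ P ∈ simplex d, ∀ x : X, chat (xhat T P) P T ≤ chat x P T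

/-- The prescription out-of-sample guarantee at speed `(a_T)`:
`limsup_{T→∞} (1/a_T) · log ℙ^∞( c(x̂_T(P̂_T), P) > ĉ*(P̂_T, T) ) ≤ -1`
for every `P ∈ 𝒫°`, stated in the equivalent ε-eventual form. -/
def PrescOOSGuarantee {X : Type*} {d : ℕ} (ℓ : X → Fin d → ℝ) (a : ℕ → ℝ)
    (chat : X → (Fin d → ℝ) → ℕ → ℝ) (xhat : ℕ → (Fin d → ℝ) → X) : Prop :=
  ∀ P ∈ simplexInt d, ∀ ε > (0 : ℝ), ∀ᶠ T : ℕ in atTop,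
    probT P T (fun ω =>
        cost ℓ (xhat T (empDist ω)) P > chatStar chat (empDist ω) T) ≤
      Real.exp ((-1 + ε) * a T)

/-- The partial order `⪯_X̂` on prescriptors:
`limsup_{T→∞} |ĉ₁*(P,T) - c*(P)| / |ĉ₂*(P,T) - c*(P)| ≤ 1` (convention `0/0 = 1`)
for every `P ∈ 𝒫°`, stated in the equivalent ε-eventual form. -/
def PrescOrder {X : Type*} {d : ℕ} (ℓ : X → Fin d → ℝ)
    (chat1 chat2 : X → (Fin d → ℝ) → ℕ → ℝ) : Prop :=
  ∀ P ∈ simplexInt d, ∀ ε > (0 : ℝ), ∀ᶠ T : ℕ in atTop,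
    ratio |chatStar chat1 P T - cstar ℓ P| |chatStar chat2 P T - cstar ℓ P| ≤ 1 + ε

/-- The equivalence `≡_X̂` on prescriptors: `|ĉ₁* - c*|` and `|ĉ₂* - c*|` are
asymptotically equivalent as `T → ∞` for every `P ∈ 𝒫°`. -/
def PrescEquiv {X : Type*} {d : ℕ} (ℓ : X → Fin d → ℝ)
    (chat1 chat2 : X → (Fin d → ℝ) → ℕ → ℝ) : Prop :=
  ∀ P ∈ simplexInt d,
    (fun T : ℕ => |chatStar chat1 P T - cstar ℓ P|) ~[atTop]
      (fun T : ℕ => |chatStar chat2 P T - cstar ℓ P|)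

/-! If the true distribution `P` lies in the KL ball of radius `r` around the empirical
distribution `P̂_T`, then `c(x̂_T(P̂_T), P) ≤ ĉ_KL(x̂_T(P̂_T), P̂_T) = ĉ_KL*(P̂_T)`, so disappointment
forces `I(P̂_T, P) > r`. By the method of types, a sample of type `Q` has probability
`exp(-T I(Q, P))` times its probability under `Q`, and there are at most `(T + 1)^d` types; hence
`ℙ^∞(I(P̂_T, P) > r) ≤ (T + 1)^d e^{-T r}`, which is `exp((-1 + o(1)) a_T)` because
`a_T ~ r T`. -/

open Finset Real

theorem EReal.coe_finset_sum {ι : Type*} (s : Finset ι) (f : ι → ℝ) :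
    ((∑ i ∈ s, f i : ℝ) : EReal) = ∑ i ∈ s, (f i : EReal) :=
  map_sum (⟨⟨Real.toEReal, EReal.coe_zero⟩, EReal.coe_add⟩ : ℝ →+ EReal) f s

theorem klTerm_of_ne_zero (q : ℝ) {p : ℝ} (hp : p ≠ 0) :
    klTerm q p = ((q * Real.log (q / p) : ℝ) : EReal) := by
  unfold klTerm
  split_ifs with hq
  · simp [hq]
  · rfl

theorem relEnt_eq_coe_sum {d : ℕ} (Q : Fin d → ℝ) {P : Fin d → ℝ} (hP : ∀ i, P i ≠ 0) :
    relEnt Q P = ((∑ i, Q i * Real.log (Q i / P i) : ℝ) : EReal) := by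
  rw [EReal.coe_finset_sum]
  exact sum_congr rfl fun i _ => klTerm_of_ne_zero _ (hP i)

section Empirical

variable {d T : ℕ}

theorem empDist_nonneg (ω : Fin T → Fin d) (i : Fin d) : 0 ≤ empDist ω i := by
  unfold empDist
  positivity

theorem empDist_apply_pos (ω : Fin T → Fin d) (t : Fin T) : 0 < empDist ω (ω t) := by
  have hcard : 0 < (univ.filter fun s => ω s = ω t).card := card_pos.2 ⟨t, by simp⟩
  have hT : 0 < T := t.pos
  unfold empDist
  positivity

theorem sum_comp_eq_mul_sum_empDist (ω : Fin T → Fin d) (g : Fin d → ℝ) :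
    ∑ t, g (ω t) = T * ∑ i, empDist ω i * g i := by
  rcases Nat.eq_zero_or_pos T with rfl | hT
  · simp
  rw [← sum_fiberwise univ ω, mul_sum]
  refine sum_congr rfl fun i _ => ?_
  rw [sum_congr rfl fun t ht => by rw [(mem_filter.1 ht).2], sum_const, nsmul_eq_mul, empDist]
  field_simp

theorem sum_empDist (hT : 0 < T) (ω : Fin T → Fin d) : ∑ i, empDist ω i = 1 := by
  have h := sum_comp_eq_mul_sum_empDist ω 1
  simp only [Pi.one_apply, mul_one, sum_const, card_univ, Fintype.card_fin, nsmul_eq_mul] at h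
  have hT' : (T : ℝ) ≠ 0 := by positivity
  exact (mul_eq_left₀ hT').1 h.symm

theorem sum_empDist_pow (ω : Fin T → Fin d) : (∑ i, empDist ω i) ^ T = 1 := by
  rcases Nat.eq_zero_or_pos T with rfl | hT
  · exact pow_zero _
  · rw [sum_empDist hT, one_pow]

theorem empDist_mem_simplex (hT : 0 < T) (ω : Fin T → Fin d) : empDist ω ∈ simplex d :=
  ⟨empDist_nonneg ω, sum_empDist hT ω⟩

theorem card_image_empDist_le :
    (univ.image (empDist : (Fin T → Fin d) → Fin d → ℝ)).card ≤ (T + 1) ^ d := by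
  have hsub : univ.image (empDist : (Fin T → Fin d) → Fin d → ℝ) ⊆
      (Fintype.piFinset fun _ => range (T + 1)).image fun k i => (k i : ℝ) / T := by
    rintro _ hQ
    obtain ⟨ω, -, rfl⟩ := mem_image.1 hQ
    refine mem_image.2 ⟨fun i => (univ.filter fun t => ω t = i).card, ?_, rfl⟩
    simp only [Fintype.mem_piFinset, mem_range]
    exact fun i => Nat.lt_succ_of_le ((card_filter_le _ _).trans (by simp))
  calc _ ≤ _ := card_le_card hsub
    _ ≤ _ := card_image_le
    _ = (T + 1) ^ d := by simp

end Empirical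

section MethodOfTypes

variable {d T : ℕ} {P : Fin d → ℝ}

theorem prod_eq_exp_mul_prod_empDist (hP : ∀ i, 0 < P i) (ω : Fin T → Fin d) :
    ∏ t, P (ω t) =
      exp (-T * ∑ i, empDist ω i * log (empDist ω i / P i)) * ∏ t, empDist ω (ω t) := by
  have hsplit : ∑ i, empDist ω i * log (empDist ω i / P i) =
      ∑ i, empDist ω i * log (empDist ω i) - ∑ i, empDist ω i * log (P i) := by
    rw [← sum_sub_distrib]
    refine sum_congr rfl fun i _ => ?_
    rcases (empDist_nonneg ω i).eq_or_lt with h | h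
    · simp [← h]
    · rw [log_div h.ne' (hP i).ne']
      ring
  rw [← exp_log (prod_pos fun t _ => hP (ω t)),
    ← exp_log (prod_pos fun t _ => empDist_apply_pos ω t), ← exp_add,
    log_prod fun t _ => (hP (ω t)).ne', log_prod fun t _ => (empDist_apply_pos ω t).ne',
    sum_comp_eq_mul_sum_empDist ω fun i => log (P i),
    sum_comp_eq_mul_sum_empDist ω fun i => log (empDist ω i),
    hsplit]
  ring_nf

theorem prod_le_exp_mul_prod_empDist (hP : ∀ i, 0 < P i) {r : ℝ} (ω : Fin T → Fin d)
    (hr : (r : EReal) < relEnt (empDist ω) P) :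
    ∏ t, P (ω t) ≤ exp (-T * r) * ∏ t, empDist ω (ω t) := by
  rw [relEnt_eq_coe_sum _ fun i => (hP i).ne', EReal.coe_lt_coe_iff] at hr
  rw [prod_eq_exp_mul_prod_empDist hP ω]
  refine mul_le_mul_of_nonneg_right (exp_le_exp.2 ?_) (prod_nonneg fun t _ => empDist_nonneg ω _)
  exact mul_le_mul_of_nonpos_left hr.le (neg_nonpos.2 T.cast_nonneg)

theorem sum_prod_empDist_le :
    ∑ ω : Fin T → Fin d, ∏ t, empDist ω (ω t) ≤ ((T : ℝ) + 1) ^ d := by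
  set K := univ.image (empDist : (Fin T → Fin d) → Fin d → ℝ)
  have hK : ∀ Q ∈ K, ∀ ω : Fin T → Fin d, 0 ≤ ∏ t, Q (ω t) := by
    intro Q hQ ω
    obtain ⟨ω', -, rfl⟩ := mem_image.1 hQ
    exact prod_nonneg fun t _ => empDist_nonneg ω' _
  calc ∑ ω : Fin T → Fin d, ∏ t, empDist ω (ω t)
      ≤ ∑ ω : Fin T → Fin d, ∑ Q ∈ K, ∏ t, Q (ω t) :=
        sum_le_sum fun ω _ => single_le_sum (f := fun Q => ∏ t, Q (ω t))
          (fun Q hQ => hK Q hQ ω) (mem_image_of_mem _ (mem_univ ω))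
    _ = ∑ Q ∈ K, (∑ i, Q i) ^ T := by
        rw [sum_comm]
        simp_rw [Fintype.sum_pow]
    _ = K.card := by
        rw [card_eq_sum_ones, Nat.cast_sum]
        refine sum_congr rfl fun Q hQ => ?_
        obtain ⟨ω, -, rfl⟩ := mem_image.1 hQ
        simp [sum_empDist_pow]
    _ ≤ ((T : ℝ) + 1) ^ d := by exact_mod_cast card_image_empDist_le

theorem probT_mono (hP : ∀ i, 0 ≤ P i) {A B : (Fin T → Fin d) → Prop}
    (hAB : ∀ ω, A ω → B ω) : probT P T A ≤ probT P T B := by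
  unfold probT
  refine sum_le_sum fun ω _ => ?_
  split_ifs with hA hB hB
  · exact le_rfl
  · exact absurd (hAB ω hA) hB
  · exact prod_nonneg fun t _ => hP _
  · exact le_rfl

theorem probT_lt_relEnt_empDist_le (hP : ∀ i, 0 < P i) (r : ℝ) :
    probT P T (fun ω => (r : EReal) < relEnt (empDist ω) P) ≤
      ((T : ℝ) + 1) ^ d * exp (-T * r) := by
  calc probT P T (fun ω => (r : EReal) < relEnt (empDist ω) P)
      ≤ ∑ ω : Fin T → Fin d, exp (-T * r) * ∏ t, empDist ω (ω t) := by
        unfold probT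
        refine sum_le_sum fun ω _ => ?_
        split_ifs with h
        · exact prod_le_exp_mul_prod_empDist hP ω h
        · exact mul_nonneg (exp_nonneg _) (prod_nonneg fun t _ => empDist_nonneg ω _)
    _ = exp (-T * r) * ∑ ω : Fin T → Fin d, ∏ t, empDist ω (ω t) := (mul_sum _ _ _).symm
    _ ≤ exp (-T * r) * ((T : ℝ) + 1) ^ d := by gcongr; exact sum_prod_empDist_le
    _ = ((T : ℝ) + 1) ^ d * exp (-T * r) := mul_comm _ _

end MethodOfTypes

theorem IsPrescriptor.apply_le_chatStar {X : Type*} {d : ℕ} {chat : X → (Fin d → ℝ) → ℕ → ℝ}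
    {xhat : ℕ → (Fin d → ℝ) → X} (h : IsPrescriptor chat xhat) (T : ℕ) {P : Fin d → ℝ}
    (hP : P ∈ simplex d) : chat (xhat T P) P T ≤ chatStar chat P T :=
  le_csInf ⟨_, Set.mem_range_self (xhat T P)⟩ fun _ ⟨x, hx⟩ => hx ▸ h T P hP x

section KLDRO

variable {X : Type*} {d : ℕ} (ℓ : X → Fin d → ℝ)

theorem cost_le_sum_abs (x : X) {P : Fin d → ℝ} (hP : P ∈ simplex d) :
    cost ℓ x P ≤ ∑ i, |ℓ x i| := by
  refine sum_le_sum fun i _ => ?_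
  have hPi : P i ≤ 1 := hP.2 ▸ single_le_sum (fun j _ => hP.1 j) (mem_univ i)
  calc ℓ x i * P i ≤ |ℓ x i| * P i := mul_le_mul_of_nonneg_right (le_abs_self _) (hP.1 i)
    _ ≤ |ℓ x i| := mul_le_of_le_one_right (abs_nonneg _) hPi

theorem cost_le_cKL {r : ℝ} (x : X) {Q P : Fin d → ℝ} (hP : P ∈ simplex d)
    (hQP : relEnt Q P ≤ r) : cost ℓ x P ≤ cKL ℓ r x Q :=
  le_csSup ⟨∑ i, |ℓ x i|, fun _ ⟨_, hP', _, hy⟩ => hy ▸ cost_le_sum_abs ℓ x hP'⟩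
    ⟨P, hP, hQP, rfl⟩

theorem cost_le_chatStar_cKL_of_relEnt_le {r : ℝ} {xhat : ℕ → (Fin d → ℝ) → X}
    (hxhat : IsPrescriptor (fun x P (_ : ℕ) => cKL ℓ r x P) xhat) (T : ℕ) {Q P : Fin d → ℝ}
    (hQ : Q ∈ simplex d) (hP : P ∈ simplex d) (hQP : relEnt Q P ≤ r) :
    cost ℓ (xhat T Q) P ≤ chatStar (fun x P (_ : ℕ) => cKL ℓ r x P) Q T :=
  (cost_le_cKL ℓ _ hP hQP).trans (hxhat.apply_le_chatStar T hQ)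

end KLDRO

theorem eventually_add_one_pow_mul_exp_le (d : ℕ) {a : ℕ → ℝ} {r ε : ℝ} (hr : 0 < r)
    (hε : 0 < ε) (ha : Tendsto (fun T : ℕ => a T / T) atTop (nhds r)) :
    ∀ᶠ T : ℕ in atTop, ((T : ℝ) + 1) ^ d * exp (-T * r) ≤ exp ((-1 + ε) * a T) := by
  have hlog : Tendsto (fun T : ℕ => log ((T : ℝ) + 1) / T) atTop (nhds 0) :=
    ((tendsto_pow_log_div_mul_add_atTop 1 (-1) 1 one_ne_zero).comp
      (tendsto_atTop_add_const_right _ 1 tendsto_natCast_atTop_atTop)).congr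
      fun T => by simp
  have hlim : Tendsto (fun T : ℕ => d * (log ((T : ℝ) + 1) / T) - r + (1 - ε) * (a T / T))
      atTop (nhds (-(ε * r))) := by
    convert ((hlog.const_mul (d : ℝ)).sub_const r).add (ha.const_mul (1 - ε)) using 2
    ring
  filter_upwards [hlim.eventually (gt_mem_nhds (neg_neg_of_pos (mul_pos hε hr))),
    eventually_gt_atTop 0] with T hneg hT
  have hT' : (0 : ℝ) < T := Nat.cast_pos.2 hT
  have hscaled : (T : ℝ) * (d * (log ((T : ℝ) + 1) / T) - r + (1 - ε) * (a T / T)) =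
      d * log ((T : ℝ) + 1) - T * r + (1 - ε) * a T := by
    field_simp
  rw [← exp_log (by positivity : (0 : ℝ) < ((T : ℝ) + 1) ^ d), ← exp_add, exp_le_exp, log_pow]
  linarith [mul_neg_of_pos_of_neg hT' hneg]

theorem stmt_10_general {X : Type*} {d : ℕ}
    (ℓ : X → Fin d → ℝ) (a : ℕ → ℝ) (r : ℝ) (hr : 0 < r)
    (ha_r : Tendsto (fun T : ℕ => a T / (T : ℝ)) atTop (nhds r))
    (xhat : ℕ → (Fin d → ℝ) → X)
    (hxhat : IsPrescriptor (fun x P (_ : ℕ) => cKL ℓ r x P) xhat) :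
    PrescOOSGuarantee ℓ a (fun x P (_ : ℕ) => cKL ℓ r x P) xhat := by
  intro P hP ε hε
  have hPsimplex : P ∈ simplex d := ⟨fun i => (hP.1 i).le, hP.2⟩
  filter_upwards [eventually_gt_atTop 0, eventually_add_one_pow_mul_exp_le d hr hε ha_r]
    with T hT hbound
  calc _ ≤ probT P T (fun ω => (r : EReal) < relEnt (empDist ω) P) := by
        refine probT_mono (fun i => (hP.1 i).le) fun ω hω => ?_
        by_contra! hle
        exact hω.not_ge (cost_le_chatStar_cKL_of_relEnt_le ℓ hxhat T
          (empDist_mem_simplex hT ω) hPsimplex hle)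
    _ ≤ ((T : ℝ) + 1) ^ d * exp (-T * r) := probT_lt_relEnt_empDist_le hP.1 r
    _ ≤ _ := hbound

/-- In the exponential regime (`a_T/T → r > 0`), the KL-DRO predictor together with
any associated argmin prescriptor satisfies the prescription out-of-sample guarantee. -/
theorem stmt_10 {X : Type*} [MetricSpace X] [CompactSpace X] {d : ℕ}
    (ℓ : X → Fin d → ℝ) (hℓ : ∀ i, Continuous fun x => ℓ x i)
    (a : ℕ → ℝ) (ha_pos : ∀ T, 0 < a T)
    (ha_top : Tendsto a atTop atTop)
    (r : ℝ) (hr : 0 < r)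
    (ha_r : Tendsto (fun T : ℕ => a T / (T : ℝ)) atTop (nhds r))
    (xhat : ℕ → (Fin d → ℝ) → X)
    (hxhat : IsPrescriptor (fun x P (_ : ℕ) => cKL ℓ r x P) xhat) :
    PrescOOSGuarantee ℓ a (fun x P (_ : ℕ) => cKL ℓ r x P) xhat :=
  stmt_10_general ℓ a r hr ha_r xhat hxhat

end DDO
end

section
/- (Convexity of SVP.) Suppose in addition that 𝒳 is a compact convex subset of ℝ^n and that x ↦ ℓ(x,i) is convex on 𝒳 for each scenario i ∈ Σ. Let Q ∈ 𝒫° and T ∈ ℕ, and suppose √(2a_T/T) ≤ (min_{i∈Σ} Q(i)) · (min_{i∈Σ} min(Q(i), 1−Q(i))). Then the function x ↦ c(x,Q) + √( (2a_T/T)·Var_Q(ℓ(x,ξ)) ) is convex on 𝒳. -/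
open Filter Asymptotics

namespace DDO

/-! For `0 ≤ κ ≤ min_i Q(i)`, the value `c(x,Q) + √(κ Var_Q(ℓ(x,ξ)))` is the maximum of `c(x,P)`
over the χ²-ball `{P ∈ 𝒫 : ∑ (P i - Q i)² / Q i ≤ κ}`. Cauchy–Schwarz bounds every `c(x,P)` in
the ball, and the tilted distribution `P i = Q i (1 + r (ℓ(x,i) - c(x,Q)))` with
`r = √(κ / Var_Q)` attains the bound; it stays nonnegative precisely because `κ ≤ Q i`.
Each `x ↦ c(x,P)` with `P ≥ 0` is convex, and a pointwise maximum of convex functions is convex. -/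

theorem convexOn_of_le_of_exists_eq {𝕜 E β ι : Type*} [Semiring 𝕜] [PartialOrder 𝕜]
    [AddCommMonoid E] [SMul 𝕜 E] [AddCommMonoid β] [PartialOrder β] [IsOrderedAddMonoid β]
    [Module 𝕜 β] [PosSMulMono 𝕜 β] {s : Set E} {f : E → β} {g : ι → E → β} {A : Set ι}
    (hs : Convex 𝕜 s) (hg : ∀ j ∈ A, ConvexOn 𝕜 s (g j))
    (hle : ∀ j ∈ A, ∀ x ∈ s, g j x ≤ f x) (hattain : ∀ x ∈ s, ∃ j ∈ A, g j x = f x) :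
    ConvexOn 𝕜 s f := by
  refine ⟨hs, fun x hx y hy a b ha hb hab => ?_⟩
  obtain ⟨j, hj, hjeq⟩ := hattain _ (hs hx hy ha hb hab)
  calc f (a • x + b • y) = g j (a • x + b • y) := hjeq.symm
    _ ≤ a • g j x + b • g j y := (hg j hj).2 hx hy ha hb hab
    _ ≤ a • f x + b • f y := by gcongr <;> exact hle j hj _ ‹_›

def chiSqBall {d : ℕ} (Q : Fin d → ℝ) (κ : ℝ) : Set (Fin d → ℝ) :=
  {P | P ∈ simplex d ∧ ∑ i, (P i - Q i) ^ 2 / Q i ≤ κ}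

section Loss

variable {X : Type*} {d : ℕ} (ℓ : X → Fin d → ℝ) (x : X) {Q : Fin d → ℝ}

theorem sum_sub_cost_mul_eq_zero (hQ : ∑ i, Q i = 1) :
    ∑ i, (ℓ x i - cost ℓ x Q) * Q i = 0 := by
  simp only [sub_mul, Finset.sum_sub_distrib, ← Finset.mul_sum, hQ, mul_one, cost]
  exact sub_self _

theorem varLoss_eq_sum_sq_sub_cost (hQ : ∑ i, Q i = 1) :
    varLoss ℓ x Q = ∑ i, (ℓ x i - cost ℓ x Q) ^ 2 * Q i := by
  have hexpand : ∀ i, (ℓ x i - cost ℓ x Q) ^ 2 * Q i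
      = ℓ x i ^ 2 * Q i - 2 * cost ℓ x Q * (ℓ x i * Q i) + cost ℓ x Q ^ 2 * Q i :=
    fun i => by ring
  simp only [hexpand, Finset.sum_add_distrib, Finset.sum_sub_distrib, ← Finset.mul_sum, hQ]
  unfold varLoss cost
  ring

theorem varLoss_nonneg (hQpos : ∀ i, 0 ≤ Q i) (hQ : ∑ i, Q i = 1) : 0 ≤ varLoss ℓ x Q := by
  rw [varLoss_eq_sum_sq_sub_cost ℓ x hQ]
  exact Finset.sum_nonneg fun i _ => mul_nonneg (sq_nonneg _) (hQpos i)

theorem cost_le_cost_add_sqrt_of_mem_chiSqBall (hQpos : ∀ i, 0 < Q i) (hQ : ∑ i, Q i = 1)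
    {κ : ℝ} {P : Fin d → ℝ} (hP : P ∈ chiSqBall Q κ) :
    cost ℓ x P ≤ cost ℓ x Q + Real.sqrt (κ * varLoss ℓ x Q) := by
  obtain ⟨⟨-, hPsum⟩, hχ⟩ := hP
  set c := cost ℓ x Q
  have hcentered : cost ℓ x P - c = ∑ i, (ℓ x i - c) * (P i - Q i) := by
    have hmass : ∑ i, (P i - Q i) = 0 := by rw [Finset.sum_sub_distrib, hPsum, hQ, sub_self]
    have hsplit : ∑ i, (ℓ x i - c) * (P i - Q i)
        = ∑ i, ℓ x i * (P i - Q i) - c * ∑ i, (P i - Q i) := by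
      rw [Finset.mul_sum, ← Finset.sum_sub_distrib]
      exact Finset.sum_congr rfl fun i _ => by ring
    rw [hsplit, hmass, mul_zero, sub_zero]
    simp only [c, cost, mul_sub, Finset.sum_sub_distrib]
  have hCS : (cost ℓ x P - c) ^ 2 ≤ κ * varLoss ℓ x Q := by
    rw [mul_comm, hcentered, varLoss_eq_sum_sq_sub_cost ℓ x hQ]
    refine (Finset.sum_sq_le_sum_mul_sum_of_sq_le_mul _
      (fun i _ => mul_nonneg (sq_nonneg _) (hQpos i).le)
      (fun i _ => div_nonneg (sq_nonneg _) (hQpos i).le) fun i _ => ?_).trans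
      (mul_le_mul_of_nonneg_left hχ (Finset.sum_nonneg fun i _ =>
        mul_nonneg (sq_nonneg _) (hQpos i).le))
    have := (hQpos i).ne'
    exact le_of_eq (by field_simp; ring)
  linarith [le_abs_self (cost ℓ x P - c), Real.abs_le_sqrt hCS]

theorem exists_mem_chiSqBall_cost_eq (hQ : Q ∈ simplexInt d) {κ : ℝ} (hκ : 0 ≤ κ)
    (hκQ : ∀ i, κ ≤ Q i) :
    ∃ P ∈ chiSqBall Q κ, cost ℓ x P = cost ℓ x Q + Real.sqrt (κ * varLoss ℓ x Q) := by
  obtain ⟨hQpos, hQsum⟩ := hQ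
  set c := cost ℓ x Q
  set V := varLoss ℓ x Q
  have hV : V = ∑ i, (ℓ x i - c) ^ 2 * Q i := varLoss_eq_sum_sq_sub_cost ℓ x hQsum
  have hVnn : 0 ≤ V := varLoss_nonneg ℓ x (fun i => (hQpos i).le) hQsum
  have hcentered : ∑ i, (ℓ x i - c) * Q i = 0 := sum_sub_cost_mul_eq_zero ℓ x hQsum
  set r := Real.sqrt (κ / V)
  -- if `V = 0` then `r = 0` and the tilted distribution is `Q` itself
  have hrV : r * V = Real.sqrt (κ * V) := by
    rcases eq_or_ne V 0 with h | h
    · simp [h]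
    · rw [show κ * V = κ / V * V ^ 2 by field_simp, Real.sqrt_mul (div_nonneg hκ hVnn),
        Real.sqrt_sq hVnn]
  have hr2V : r ^ 2 * V ≤ κ := by
    rcases eq_or_ne V 0 with h | h
    · simp [h, hκ]
    · rw [Real.sq_sqrt (div_nonneg hκ hVnn), div_mul_cancel₀ _ h]
  refine ⟨fun i => Q i * (1 + r * (ℓ x i - c)), ⟨⟨fun i => ?_, ?_⟩, ?_⟩, ?_⟩
  · have hterm : (ℓ x i - c) ^ 2 * Q i ≤ V := hV ▸ Finset.single_le_sum
      (f := fun j => (ℓ x j - c) ^ 2 * Q j)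
      (fun j _ => mul_nonneg (sq_nonneg _) (hQpos j).le) (Finset.mem_univ i)
    have hsq : (r * (ℓ x i - c)) ^ 2 * Q i ≤ Q i := by
      calc (r * (ℓ x i - c)) ^ 2 * Q i = r ^ 2 * ((ℓ x i - c) ^ 2 * Q i) := by ring
        _ ≤ r ^ 2 * V := mul_le_mul_of_nonneg_left hterm (sq_nonneg r)
        _ ≤ Q i := hr2V.trans (hκQ i)
    have hsq_le_one : (r * (ℓ x i - c)) ^ 2 ≤ 1 :=
      le_of_mul_le_mul_right (by rwa [one_mul]) (hQpos i)
    have : -1 ≤ r * (ℓ x i - c) := by nlinarith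
    exact mul_nonneg (hQpos i).le (by linarith)
  · calc ∑ i, Q i * (1 + r * (ℓ x i - c)) = ∑ i, Q i + r * ∑ i, (ℓ x i - c) * Q i := by
          rw [Finset.mul_sum, ← Finset.sum_add_distrib]
          exact Finset.sum_congr rfl fun i _ => by ring
      _ = 1 := by rw [hQsum, hcentered, mul_zero, add_zero]
  · calc ∑ i, (Q i * (1 + r * (ℓ x i - c)) - Q i) ^ 2 / Q i
          = r ^ 2 * ∑ i, (ℓ x i - c) ^ 2 * Q i := by
          rw [Finset.mul_sum]
          refine Finset.sum_congr rfl fun i _ => ?_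
          have := (hQpos i).ne'
          field_simp
          ring
      _ ≤ κ := hV ▸ hr2V
  · calc cost ℓ x (fun i => Q i * (1 + r * (ℓ x i - c)))
          = ∑ i, (ℓ x i * Q i + r * ((ℓ x i - c) ^ 2 * Q i) + r * c * ((ℓ x i - c) * Q i)) :=
          Finset.sum_congr rfl fun i _ => by ring
      _ = c + r * ∑ i, (ℓ x i - c) ^ 2 * Q i + r * c * ∑ i, (ℓ x i - c) * Q i := by
          rw [Finset.sum_add_distrib, Finset.sum_add_distrib, ← Finset.mul_sum, ← Finset.mul_sum]
          rfl
      _ = c + Real.sqrt (κ * V) := by rw [← hV, hcentered, mul_zero, add_zero, hrV]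

end Loss

theorem convexOn_cost {E : Type*} [AddCommMonoid E] [Module ℝ E] {d : ℕ} {s : Set E}
    {ℓ : E → Fin d → ℝ} {P : Fin d → ℝ} (hs : Convex ℝ s)
    (hℓ : ∀ i, ConvexOn ℝ s fun x => ℓ x i) (hP : ∀ i, 0 ≤ P i) :
    ConvexOn ℝ s fun x => cost ℓ x P := by
  refine ⟨hs, fun x hx y hy a b ha hb hab => ?_⟩
  simp only [cost, smul_eq_mul, Finset.mul_sum, ← Finset.sum_add_distrib]
  refine Finset.sum_le_sum fun i _ => ?_
  calc ℓ (a • x + b • y) i * P i ≤ (a • ℓ x i + b • ℓ y i) * P i :=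
        mul_le_mul_of_nonneg_right ((hℓ i).2 hx hy ha hb hab) (hP i)
    _ = a * (ℓ x i * P i) + b * (ℓ y i * P i) := by simp only [smul_eq_mul]; ring

theorem convexOn_cost_add_sqrt_mul_varLoss {E : Type*} [AddCommMonoid E] [Module ℝ E] {d : ℕ}
    {s : Set E} {ℓ : E → Fin d → ℝ} {Q : Fin d → ℝ} {κ : ℝ} (hs : Convex ℝ s)
    (hℓ : ∀ i, ConvexOn ℝ s fun x => ℓ x i) (hQ : Q ∈ simplexInt d) (hκ : 0 ≤ κ)
    (hκQ : ∀ i, κ ≤ Q i) :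
    ConvexOn ℝ s fun x => cost ℓ x Q + Real.sqrt (κ * varLoss ℓ x Q) :=
  convexOn_of_le_of_exists_eq (g := fun P x => cost ℓ x P) (A := chiSqBall Q κ) hs
    (fun _ hP => convexOn_cost hs hℓ hP.1.1)
    (fun _ hP x _ => cost_le_cost_add_sqrt_of_mem_chiSqBall ℓ x hQ.1 hQ.2 hP)
    (fun x _ => exists_mem_chiSqBall_cost_eq ℓ x hQ hκ hκQ)

theorem le_of_sqrt_le_mul_one_sub {κ q : ℝ} (hκ : 0 ≤ κ) (h : Real.sqrt κ ≤ q * (1 - q)) :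
    κ ≤ q := by
  have hs := Real.sqrt_nonneg κ
  have hsq : Real.sqrt κ ≤ q := by nlinarith [sq_nonneg q]
  have hs1 : Real.sqrt κ ≤ 1 := by nlinarith [sq_nonneg (q - 1 / 2)]
  calc κ = Real.sqrt κ * Real.sqrt κ := (Real.mul_self_sqrt hκ).symm
    _ ≤ q * 1 := mul_le_mul hsq hs1 hs (hs.trans hsq)
    _ = q := mul_one q

theorem stmt_14_general {n d : ℕ} (Xs : Set (Fin n → ℝ))
    (hXconv : Convex ℝ Xs)
    (ℓ : (Fin n → ℝ) → Fin d → ℝ)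
    (hℓconv : ∀ i, ConvexOn ℝ Xs fun x => ℓ x i)
    (a : ℕ → ℝ) (ha_pos : ∀ T, 0 < a T)
    (Q : Fin d → ℝ) (hQ : Q ∈ simplexInt d)
    (T : ℕ)
    (hTlarge : ∀ i j : Fin d,
      Real.sqrt (2 * a T / (T : ℝ)) ≤ Q i * min (Q j) (1 - Q j)) :
    ConvexOn ℝ Xs fun x =>
      cost ℓ x Q + Real.sqrt ((2 * a T / (T : ℝ)) * varLoss ℓ x Q) := by
  have hκ : 0 ≤ 2 * a T / (T : ℝ) := by
    have := ha_pos T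
    positivity
  exact convexOn_cost_add_sqrt_mul_varLoss hXconv hℓconv hQ hκ fun i =>
    le_of_sqrt_le_mul_one_sub hκ
      ((hTlarge i i).trans (mul_le_mul_of_nonneg_left (min_le_right _ _) (hQ.1 i).le))

/-- Convexity of SVP: if `𝒳` is a compact convex subset of `ℝ^n`, the loss is convex
in the decision, and `√(2a_T/T) ≤ (min_i Q(i)) · (min_i min(Q(i), 1-Q(i)))`, then
`x ↦ c(x,Q) + √((2a_T/T)·Var_Q(ℓ(x,ξ)))` is convex on `𝒳`. -/
theorem stmt_14 {n d : ℕ} (Xs : Set (Fin n → ℝ))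
    (hXconv : Convex ℝ Xs) (hXcomp : IsCompact Xs)
    (ℓ : (Fin n → ℝ) → Fin d → ℝ)
    (hℓcont : ∀ i, ContinuousOn (fun x => ℓ x i) Xs)
    (hℓconv : ∀ i, ConvexOn ℝ Xs fun x => ℓ x i)
    (a : ℕ → ℝ) (ha_pos : ∀ T, 0 < a T)
    (Q : Fin d → ℝ) (hQ : Q ∈ simplexInt d)
    (T : ℕ) (hT : 0 < T)
    (hTlarge : ∀ i j : Fin d,
      Real.sqrt (2 * a T / (T : ℝ)) ≤ Q i * min (Q j) (1 - Q j)) :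
    ConvexOn ℝ Xs fun x =>
      cost ℓ x Q + Real.sqrt ((2 * a T / (T : ℝ)) * varLoss ℓ x Q) :=
  stmt_14_general Xs hXconv ℓ hℓconv a ha_pos Q hQ T hTlarge

end DDO
end

section
/- (Regularization of SVP prescription.) Let (a_T) be positive with a_T/T → 0, and fix P ∈ 𝒫°. Let x*(P) be a minimizer of c(·,P) with lowest variance, i.e., x*(P) ∈ argmin{ Var_P(ℓ(x,ξ)) : x ∈ argmin_{x'∈𝒳} c(x',P) }. Then for all T ∈ ℕ: |ĉ_V*(P,T) − c*(P)| ≤ √( (2a_T/T)·Var_P(ℓ(x*(P),ξ)) ), where ĉ_V*(P,T) := min_{x∈𝒳} ĉ_V(x,P,T) and c*(P) := min_{x∈𝒳} c(x,P). Furthermore, ĉ_V*(P,T) − c*(P) = √( (2a_T/T)·Var_P(ℓ(x*(P),ξ)) ) + o(√(a_T/T)) as T → ∞, and for any sequence x̂_{V,T}(P) ∈ argmin_{x∈𝒳} ĉ_V(x,P,T) one has Var_P(ℓ(x̂_{V,T}(P),ξ)) → Var_P(ℓ(x*(P),ξ)) as T → ∞. -/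
open Filter Asymptotics

/-!
With `κ_T = 2 a_T / T`, the SVP objective is `c(x) + √(κ_T Var(x))`. Since the penalty is
nonnegative, `c* ≤ ĉ_V* ≤ ĉ_V(x*) = c* + √(κ_T Var(x*))`, which is the bound.

For the expansion and the convergence of the variance, the key fact is a uniform gap: by
compactness, and because no minimizer of the cost has variance below `Var(x*)`, every decision
with variance at most `Var(x*) - ε` costs at least `c* + δ` for some `δ > 0`. Once
`√(κ_T Var(x*)) < δ` such decisions cannot beat `x*`, while any other decision lowers the
penalty below that of `x*` by at most `√(κ_T ε)`, by subadditivity of the square root.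
-/

open Topology

lemma Real.sqrt_le_sqrt_sub_add_sqrt {x y : ℝ} (hy : 0 ≤ y) : √x ≤ √(x - y) + √y := by
  rcases le_total x y with h | h
  · exact (Real.sqrt_le_sqrt h).trans (le_add_of_nonneg_left (Real.sqrt_nonneg _))
  · refine Real.sqrt_le_iff.2 ⟨by positivity, ?_⟩
    nlinarith [Real.sq_sqrt (sub_nonneg.2 h), Real.sq_sqrt hy, Real.sqrt_nonneg (x - y),
      Real.sqrt_nonneg y]

section LexicographicMinimizer

variable {X : Type*} {f v : X → ℝ} {x₀ : X}

lemma sInf_range_add_sqrt_le (hmin : ∀ x, f x₀ ≤ f x) (κ : ℝ) :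
    sInf (Set.range fun x => f x + √(κ * v x)) ≤ f x₀ + √(κ * v x₀) :=
  csInf_le ⟨f x₀, Set.forall_mem_range.2 fun x =>
    (hmin x).trans (le_add_of_nonneg_right (Real.sqrt_nonneg _))⟩ ⟨x₀, rfl⟩

lemma abs_sInf_range_add_sqrt_sub_le (hmin : ∀ x, f x₀ ≤ f x) (κ : ℝ) :
    |sInf (Set.range fun x => f x + √(κ * v x)) - f x₀| ≤ √(κ * v x₀) := by
  have hlower : f x₀ ≤ sInf (Set.range fun x => f x + √(κ * v x)) :=
    le_csInf ⟨_, x₀, rfl⟩ (Set.forall_mem_range.2 fun x =>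
      (hmin x).trans (le_add_of_nonneg_right (Real.sqrt_nonneg _)))
  rw [abs_le]
  constructor
  · linarith [Real.sqrt_nonneg (κ * v x₀)]
  · linarith [sInf_range_add_sqrt_le (v := v) hmin κ]

lemma exists_pos_add_le_of_le_sub [TopologicalSpace X] [CompactSpace X] (hf : Continuous f)
    (hv : Continuous v) (hmin : ∀ x, f x₀ ≤ f x)
    (hlow : ∀ x, (∀ y, f x ≤ f y) → v x₀ ≤ v x) {ε : ℝ} (hε : 0 < ε) :
    ∃ δ > 0, ∀ x, v x ≤ v x₀ - ε → f x₀ + δ ≤ f x := by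
  rcases {x | v x ≤ v x₀ - ε}.eq_empty_or_nonempty with hS | hS
  · exact ⟨1, one_pos, fun x hx => absurd hx (Set.eq_empty_iff_forall_notMem.1 hS x)⟩
  obtain ⟨x₁, hx₁S, hx₁⟩ := (isClosed_le hv continuous_const).isCompact.exists_isMinOn hS
    hf.continuousOn
  refine ⟨f x₁ - f x₀, ?_, fun x hx => by linarith [isMinOn_iff.1 hx₁ x hx]⟩
  by_contra! hx₁min
  have := hlow x₁ fun y => by linarith [hmin y]
  linarith [show v x₁ ≤ v x₀ - ε from hx₁S]

lemma add_sqrt_sub_sqrt_le_add_sqrt (hmin : ∀ x, f x₀ ≤ f x) {κ ε δ : ℝ} (hκ : 0 ≤ κ)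
    (hε : 0 ≤ ε) (hgap : ∀ x, v x ≤ v x₀ - ε → f x₀ + δ ≤ f x) (hδ : √(κ * v x₀) ≤ δ)
    (x : X) : f x₀ + √(κ * v x₀) - √(κ * ε) ≤ f x + √(κ * v x) := by
  rcases le_or_gt (v x) (v x₀ - ε) with hx | hx
  · linarith [hgap x hx, Real.sqrt_nonneg (κ * ε), Real.sqrt_nonneg (κ * v x)]
  · have hsplit := Real.sqrt_le_sqrt_sub_add_sqrt (x := κ * v x₀) (mul_nonneg hκ hε)
    have hmono : √(κ * v x₀ - κ * ε) ≤ √(κ * v x) :=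
      Real.sqrt_le_sqrt (by nlinarith)
    linarith [hmin x]

variable [TopologicalSpace X] [CompactSpace X] {ι : Type*} {l : Filter ι} {κ : ι → ℝ}

lemma tendsto_sqrt_mul_const (hκ0 : Tendsto κ l (𝓝 0)) (c : ℝ) :
    Tendsto (fun t => √(κ t * c)) l (𝓝 0) := by
  simpa using (hκ0.mul_const c).sqrt

theorem isLittleO_sInf_range_add_sqrt_sub (hf : Continuous f) (hv : Continuous v)
    (hmin : ∀ x, f x₀ ≤ f x) (hlow : ∀ x, (∀ y, f x ≤ f y) → v x₀ ≤ v x)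
    (hκ : ∀ t, 0 ≤ κ t) (hκ0 : Tendsto κ l (𝓝 0)) :
    (fun t => sInf (Set.range fun x => f x + √(κ t * v x)) - f x₀ - √(κ t * v x₀)) =o[l]
      fun t => √(κ t) := by
  refine isLittleO_iff.2 fun c hc => ?_
  obtain ⟨δ, hδ, hgap⟩ := exists_pos_add_le_of_le_sub hf hv hmin hlow (pow_pos hc 2)
  have hsmall : ∀ᶠ t in l, √(κ t * v x₀) ≤ δ :=
    (tendsto_sqrt_mul_const hκ0 (v x₀)).eventually (ge_mem_nhds hδ)
  filter_upwards [hsmall] with t ht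
  have hlower : f x₀ + √(κ t * v x₀) - √(κ t * c ^ 2) ≤
      sInf (Set.range fun x => f x + √(κ t * v x)) :=
    le_csInf ⟨_, x₀, rfl⟩ (Set.forall_mem_range.2
      (add_sqrt_sub_sqrt_le_add_sqrt hmin (hκ t) (sq_nonneg c) hgap ht))
  have hc_sqrt : √(κ t * c ^ 2) = c * √(κ t) := by
    rw [Real.sqrt_mul (hκ t), Real.sqrt_sq hc.le, mul_comm]
  rw [Real.norm_eq_abs, Real.norm_of_nonneg (Real.sqrt_nonneg _), abs_le]
  constructor
  · linarith
  · linarith [sInf_range_add_sqrt_le (v := v) hmin (κ t), Real.sqrt_nonneg (κ t * c ^ 2)]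

theorem tendsto_of_forall_add_sqrt_le (hf : Continuous f) (hv : Continuous v)
    (hmin : ∀ x, f x₀ ≤ f x) (hlow : ∀ x, (∀ y, f x ≤ f y) → v x₀ ≤ v x) (hv₀ : 0 ≤ v x₀)
    (hκ : ∀ᶠ t in l, 0 < κ t) (hκ0 : Tendsto κ l (𝓝 0)) {xhat : ι → X}
    (hxhat : ∀ t x, f (xhat t) + √(κ t * v (xhat t)) ≤ f x + √(κ t * v x)) :
    Tendsto (fun t => v (xhat t)) l (𝓝 (v x₀)) := by
  refine tendsto_order.2 ⟨fun b hb => ?_, fun b hb => ?_⟩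
  · obtain ⟨δ, hδ, hgap⟩ := exists_pos_add_le_of_le_sub hf hv hmin hlow (sub_pos.2 hb)
    have hsmall : ∀ᶠ t in l, √(κ t * v x₀) < δ :=
      (tendsto_sqrt_mul_const hκ0 (v x₀)).eventually (gt_mem_nhds hδ)
    filter_upwards [hsmall] with t ht
    by_contra! hle
    linarith [hgap (xhat t) (by linarith), hxhat t x₀, Real.sqrt_nonneg (κ t * v (xhat t))]
  · filter_upwards [hκ] with t ht
    have hsqrt : √(κ t * v (xhat t)) ≤ √(κ t * v x₀) := by
      linarith [hxhat t x₀, hmin (xhat t)]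
    have := (Real.sqrt_le_sqrt_iff (mul_nonneg ht.le hv₀)).1 hsqrt
    nlinarith

end LexicographicMinimizer

namespace DDO

lemma continuous_cost {X : Type*} [TopologicalSpace X] {d : ℕ} {ℓ : X → Fin d → ℝ}
    (hℓ : ∀ i, Continuous fun x => ℓ x i) (P : Fin d → ℝ) : Continuous fun x => cost ℓ x P :=
  continuous_finsetSum _ fun i _ => (hℓ i).mul continuous_const

lemma continuous_varLoss {X : Type*} [TopologicalSpace X] {d : ℕ} {ℓ : X → Fin d → ℝ}
    (hℓ : ∀ i, Continuous fun x => ℓ x i) (P : Fin d → ℝ) :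
    Continuous fun x => varLoss ℓ x P :=
  (continuous_finsetSum _ fun i _ => ((hℓ i).pow 2).mul continuous_const).sub
    ((continuous_cost hℓ P).pow 2)

lemma varLoss_eq_sum_sq {X : Type*} {d : ℕ} (ℓ : X → Fin d → ℝ) (x : X) {P : Fin d → ℝ}
    (hP : ∑ i, P i = 1) :
    varLoss ℓ x P = ∑ i, (ℓ x i - cost ℓ x P) ^ 2 * P i := by
  have expand : ∀ i, (ℓ x i - cost ℓ x P) ^ 2 * P i =
      ℓ x i ^ 2 * P i - 2 * cost ℓ x P * (ℓ x i * P i) + cost ℓ x P ^ 2 * P i := fun i => by ring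
  simp only [expand, Finset.sum_add_distrib, Finset.sum_sub_distrib, ← Finset.mul_sum, hP]
  rw [varLoss, ← cost]
  ring

lemma varLoss_nonneg_s15 {X : Type*} {d : ℕ} (ℓ : X → Fin d → ℝ) (x : X) {P : Fin d → ℝ}
    (hP : P ∈ simplex d) : 0 ≤ varLoss ℓ x P := by
  rw [varLoss_eq_sum_sq ℓ x hP.2]
  exact Finset.sum_nonneg fun i _ => mul_nonneg (sq_nonneg _) (hP.1 i)

lemma cstar_eq_cost {X : Type*} {d : ℕ} {ℓ : X → Fin d → ℝ} {P : Fin d → ℝ} {x₀ : X}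
    (hmin : ∀ x, cost ℓ x₀ P ≤ cost ℓ x P) : cstar ℓ P = cost ℓ x₀ P :=
  IsLeast.csInf_eq ⟨⟨x₀, rfl⟩, Set.forall_mem_range.2 hmin⟩

/-- Regularization of the SVP prescription: with `x*(P)` a minimizer of `c(·,P)` of
lowest variance, `|ĉ_V*(P,T) - c*(P)| ≤ √((2a_T/T)·Var_P(ℓ(x*(P),ξ)))` for all `T`,
`ĉ_V*(P,T) - c*(P) = √((2a_T/T)·Var_P(ℓ(x*(P),ξ))) + o(√(a_T/T))`, and the variance
of any SVP prescription converges to `Var_P(ℓ(x*(P),ξ))`. -/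
theorem stmt_15 {X : Type*} [MetricSpace X] [CompactSpace X] {d : ℕ}
    (ℓ : X → Fin d → ℝ) (hℓ : ∀ i, Continuous fun x => ℓ x i)
    (a : ℕ → ℝ) (ha_pos : ∀ T, 0 < a T)
    (ha_sub : Tendsto (fun T : ℕ => a T / (T : ℝ)) atTop (nhds 0))
    (P : Fin d → ℝ) (hP : P ∈ simplexInt d)
    (xstar : X) (hx1 : ∀ x : X, cost ℓ xstar P ≤ cost ℓ x P)
    (hx2 : ∀ x : X, (∀ y : X, cost ℓ x P ≤ cost ℓ y P) →
      varLoss ℓ xstar P ≤ varLoss ℓ x P) :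
    (∀ T : ℕ, 0 < T →
        |chatStar (cV a ℓ) P T - cstar ℓ P| ≤
          Real.sqrt ((2 * a T / (T : ℝ)) * varLoss ℓ xstar P)) ∧
      ((fun T : ℕ => chatStar (cV a ℓ) P T - cstar ℓ P -
            Real.sqrt ((2 * a T / (T : ℝ)) * varLoss ℓ xstar P)) =o[atTop]
          fun T : ℕ => Real.sqrt (a T / (T : ℝ))) ∧
      ∀ xhatV : ℕ → X,
        (∀ (T : ℕ) (x : X), cV a ℓ (xhatV T) P T ≤ cV a ℓ x P T) →
          Tendsto (fun T : ℕ => varLoss ℓ (xhatV T) P) atTop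
            (nhds (varLoss ℓ xstar P)) := by
  have hf := continuous_cost hℓ P
  have hv := continuous_varLoss hℓ P
  have hκ : ∀ T : ℕ, 0 ≤ 2 * a T / (T : ℝ) := fun T => by have := ha_pos T; positivity
  have hκ0 : Tendsto (fun T : ℕ => 2 * a T / (T : ℝ)) atTop (𝓝 0) := by
    simpa [mul_div_assoc] using ha_sub.const_mul 2
  rw [cstar_eq_cost hx1]
  refine ⟨fun T _ => abs_sInf_range_add_sqrt_sub_le (v := fun x => varLoss ℓ x P) hx1 _, ?_,
    fun xhatV hxhatV => ?_⟩
  · have hsqrt : (fun T : ℕ => √(2 * a T / (T : ℝ))) = fun T => √2 * √(a T / (T : ℝ)) := by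
      simp only [mul_div_assoc, Real.sqrt_mul zero_le_two]
    have := isLittleO_sInf_range_add_sqrt_sub hf hv hx1 hx2 hκ hκ0
    rw [hsqrt] at this
    exact this.of_const_mul_right
  · refine tendsto_of_forall_add_sqrt_le hf hv hx1 hx2
      (varLoss_nonneg_s15 ℓ xstar ⟨fun i => (hP.1 i).le, hP.2⟩) ?_ hκ0 hxhatV
    filter_upwards [eventually_gt_atTop 0] with T hT
    have := ha_pos T
    positivity

end DDO
end

section
/- (Linear optimization over the intersection of an ellipsoid and the simplex.) Let P ∈ 𝒫°, let A be a symmetric positive definite real d×d matrix, let σ := √λ_min(A) where λ_min(A) is the smallest eigenvalue of A, let l ∈ ℝ^d, let e := (1,…,1)ᵀ ∈ ℝ^d, and let α > 0 satisfy √α < σ · min_{i∈Σ} min(P(i), 1−P(i)). If l is not a scalar multiple of e, then sup{ lᵀP' : P' ∈ 𝒫, (P'−P)ᵀA(P'−P) ≤ α } = lᵀ( P + √(α/γ)·( A⁻¹l − ((eᵀA⁻¹l)/(eᵀA⁻¹e))·A⁻¹e ) ), where γ := lᵀA⁻¹l − (eᵀA⁻¹l)²/(eᵀA⁻¹e). 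-/
open Filter Asymptotics

namespace DDO

/-! Write `Δ = P' - P`. For `P'` in the simplex, `Δ` lies in the hyperplane `e ⬝ᵥ Δ = 0`, on which
`l ⬝ᵥ Δ = ⟪w, Δ⟫_A` for the `A`-orthogonal projection `w` of `A⁻¹ l` onto the hyperplane, and
`⟪w, w⟫_A = γ`. Cauchy–Schwarz for `⟪·, ·⟫_A` bounds `l ⬝ᵥ Δ` by `√(α γ)` on the ellipsoid, with
equality at `Δ = √(α / γ) • w`. This maximizer stays in the simplex because
`λ_min(A) |Δ i|² ≤ ⟪Δ, Δ⟫_A ≤ α`, so `|Δ i| ≤ √α / σ < P i`. -/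

section HermitianForms

open Matrix

variable {n : Type*} [Fintype n]

theorem _root_.Matrix.IsHermitian.dotProduct_mulVec_comm {A : Matrix n n ℝ}
    (hA : A.IsHermitian) (x y : n → ℝ) : x ⬝ᵥ A *ᵥ y = y ⬝ᵥ A *ᵥ x := by
  rw [dotProduct_mulVec, dotProduct_comm, ← mulVec_transpose,
    ← conjTranspose_eq_transpose_of_trivial, hA.eq]

theorem _root_.Matrix.PosSemidef.sq_dotProduct_mulVec_le {A : Matrix n n ℝ}
    (hA : A.PosSemidef) (x y : n → ℝ) : (x ⬝ᵥ A *ᵥ y) ^ 2 ≤ (x ⬝ᵥ A *ᵥ x) * (y ⬝ᵥ A *ᵥ y) := by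
  have hquad : ∀ t : ℝ,
      0 ≤ (y ⬝ᵥ A *ᵥ y) * (t * t) + (2 * (x ⬝ᵥ A *ᵥ y)) * t + (x ⬝ᵥ A *ᵥ x) := by
    intro t
    have hexpand : (x + t • y) ⬝ᵥ A *ᵥ (x + t • y)
        = (y ⬝ᵥ A *ᵥ y) * (t * t) + (2 * (x ⬝ᵥ A *ᵥ y)) * t + (x ⬝ᵥ A *ᵥ x) := by
      simp only [mulVec_add, mulVec_smul, add_dotProduct, dotProduct_add, smul_dotProduct,
        dotProduct_smul, smul_eq_mul, hA.isHermitian.dotProduct_mulVec_comm y x]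
      ring
    simpa [hexpand] using hA.dotProduct_mulVec_nonneg (x + t • y)
  have hdiscrim := discrim_le_zero hquad
  rw [discrim] at hdiscrim
  nlinarith

theorem _root_.Matrix.IsHermitian.iInf_eigenvalues_mul_dotProduct_self_le [DecidableEq n]
    {A : Matrix n n ℝ} (hA : A.IsHermitian) (x : n → ℝ) :
    (⨅ i, hA.eigenvalues i) * (x ⬝ᵥ x) ≤ x ⬝ᵥ A *ᵥ x := by
  set U : Matrix n n ℝ := (hA.eigenvectorUnitary : Matrix n n ℝ)
  set y : n → ℝ := star U *ᵥ x
  have hU : ∀ z : n → ℝ, x ⬝ᵥ U *ᵥ z = y ⬝ᵥ z := by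
    intro z
    rw [dotProduct_mulVec, ← mulVec_transpose, ← conjTranspose_eq_transpose_of_trivial]
    rfl
  have hxAx : x ⬝ᵥ A *ᵥ x = ∑ i, hA.eigenvalues i * y i ^ 2 := by
    conv_lhs => rw [hA.spectral_theorem, Unitary.conjStarAlgAut_apply]
    rw [← mulVec_mulVec, ← mulVec_mulVec, hU]
    simp only [dotProduct, mulVec_diagonal, Function.comp_apply, RCLike.ofReal_real_eq_id, id_eq]
    exact Finset.sum_congr rfl fun i _ => by ring
  have hxx : x ⬝ᵥ x = ∑ i, y i ^ 2 := by
    have hy : y ⬝ᵥ y = x ⬝ᵥ x := by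
      rw [← hU, mulVec_mulVec, Matrix.mem_unitaryGroup_iff.mp hA.eigenvectorUnitary.2,
        one_mulVec]
    rw [← hy]
    simp [dotProduct, sq]
  rw [hxAx, hxx, Finset.mul_sum]
  exact Finset.sum_le_sum fun i _ => mul_le_mul_of_nonneg_right
    (ciInf_le (Set.finite_range _).bddBelow i) (sq_nonneg _)

theorem _root_.Matrix.IsHermitian.sqrt_iInf_eigenvalues_mul_abs_le [DecidableEq n]
    {A : Matrix n n ℝ} (hA : A.IsHermitian) (x : n → ℝ) (i : n) :
    √(⨅ j, hA.eigenvalues j) * |x i| ≤ √(x ⬝ᵥ A *ᵥ x) := by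
  set lam := ⨅ j, hA.eigenvalues j
  rcases le_or_gt lam 0 with hlam | hlam
  · rw [Real.sqrt_eq_zero'.mpr hlam, zero_mul]
    exact Real.sqrt_nonneg _
  have hxi : x i ^ 2 ≤ x ⬝ᵥ x := by
    simpa [dotProduct, sq] using
      Finset.single_le_sum (fun j _ => sq_nonneg (x j)) (Finset.mem_univ i)
  rw [← Real.sqrt_sq_eq_abs, ← Real.sqrt_mul' _ (sq_nonneg _)]
  exact Real.sqrt_le_sqrt <| (mul_le_mul_of_nonneg_left hxi hlam.le).trans
    (hA.iInf_eigenvalues_mul_dotProduct_self_le x)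

end HermitianForms

section HyperplaneAscent

open Matrix

variable {n : Type*} [Fintype n] [DecidableEq n]

/-- The `A`-orthogonal projection of the `A`-gradient `A⁻¹ l` of `l` onto the hyperplane
`e ⬝ᵥ Δ = 0`. -/
noncomputable def projGrad (A : Matrix n n ℝ) (e l : n → ℝ) : n → ℝ :=
  A⁻¹ *ᵥ l - ((e ⬝ᵥ A⁻¹ *ᵥ l) / (e ⬝ᵥ A⁻¹ *ᵥ e)) • (A⁻¹ *ᵥ e)

noncomputable def projGradNormSq (A : Matrix n n ℝ) (e l : n → ℝ) : ℝ :=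
  l ⬝ᵥ A⁻¹ *ᵥ l - (e ⬝ᵥ A⁻¹ *ᵥ l) ^ 2 / (e ⬝ᵥ A⁻¹ *ᵥ e)

variable {A : Matrix n n ℝ}

theorem dotProduct_projGrad_eq_zero (hA : A.PosDef) (e l : n → ℝ) :
    e ⬝ᵥ projGrad A e l = 0 := by
  have he : e ⬝ᵥ A⁻¹ *ᵥ e = 0 → e ⬝ᵥ A⁻¹ *ᵥ l = 0 := by
    intro hq
    have : e = 0 := by
      by_contra hne
      simpa [hq] using hA.inv.dotProduct_mulVec_pos hne
    simp [this]
  rw [projGrad, dotProduct_sub, dotProduct_smul, smul_eq_mul, div_mul_cancel_of_imp he,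
    sub_self]

theorem mulVec_projGrad (hA : A.PosDef) (e l : n → ℝ) :
    A *ᵥ projGrad A e l = l - ((e ⬝ᵥ A⁻¹ *ᵥ l) / (e ⬝ᵥ A⁻¹ *ᵥ e)) • e := by
  simp only [projGrad, mulVec_sub, mulVec_smul, mulVec_mulVec,
    A.mul_nonsing_inv ((isUnit_iff_isUnit_det A).mp hA.isUnit), one_mulVec]

theorem dotProduct_eq_projGrad_dotProduct_mulVec (hA : A.PosDef) (e l : n → ℝ) {Δ : n → ℝ}
    (hΔ : e ⬝ᵥ Δ = 0) :
    l ⬝ᵥ Δ = projGrad A e l ⬝ᵥ A *ᵥ Δ := by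
  rw [hA.isHermitian.dotProduct_mulVec_comm, mulVec_projGrad hA, dotProduct_comm Δ,
    sub_dotProduct, smul_dotProduct, hΔ, smul_zero, sub_zero]

theorem dotProduct_projGrad (hA : A.PosDef) (e l : n → ℝ) :
    l ⬝ᵥ projGrad A e l = projGradNormSq A e l := by
  have hsymm : l ⬝ᵥ A⁻¹ *ᵥ e = e ⬝ᵥ A⁻¹ *ᵥ l := hA.inv.isHermitian.dotProduct_mulVec_comm l e
  rw [projGrad, projGradNormSq, dotProduct_sub, dotProduct_smul, hsymm, smul_eq_mul,
    div_mul_eq_mul_div, sq]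

theorem projGrad_dotProduct_mulVec_self (hA : A.PosDef) (e l : n → ℝ) :
    projGrad A e l ⬝ᵥ A *ᵥ projGrad A e l = projGradNormSq A e l := by
  rw [← dotProduct_eq_projGrad_dotProduct_mulVec hA e l (dotProduct_projGrad_eq_zero hA e l),
    dotProduct_projGrad hA]

theorem projGradNormSq_nonneg (hA : A.PosDef) (e l : n → ℝ) : 0 ≤ projGradNormSq A e l := by
  simpa [projGrad_dotProduct_mulVec_self hA] using
    hA.posSemidef.dotProduct_mulVec_nonneg (projGrad A e l)

theorem dotProduct_le_sqrt_mul_projGradNormSq (hA : A.PosDef) (e l : n → ℝ) {α : ℝ}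
    {Δ : n → ℝ} (hΔ : e ⬝ᵥ Δ = 0) (hΔα : Δ ⬝ᵥ A *ᵥ Δ ≤ α) :
    l ⬝ᵥ Δ ≤ √(α * projGradNormSq A e l) := by
  rw [dotProduct_eq_projGrad_dotProduct_mulVec hA e l hΔ]
  refine (le_abs_self _).trans (Real.abs_le_sqrt ?_)
  calc (projGrad A e l ⬝ᵥ A *ᵥ Δ) ^ 2
      ≤ (projGrad A e l ⬝ᵥ A *ᵥ projGrad A e l) * (Δ ⬝ᵥ A *ᵥ Δ) :=
        hA.posSemidef.sq_dotProduct_mulVec_le _ _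
    _ ≤ α * projGradNormSq A e l := by
        rw [projGrad_dotProduct_mulVec_self hA, mul_comm α]
        exact mul_le_mul_of_nonneg_left hΔα (projGradNormSq_nonneg hA e l)

theorem smul_projGrad_dotProduct_mulVec_le (hA : A.PosDef) (e l : n → ℝ) {α : ℝ}
    (hα : 0 ≤ α) :
    (√(α / projGradNormSq A e l) • projGrad A e l) ⬝ᵥ A *ᵥ
      (√(α / projGradNormSq A e l) • projGrad A e l) ≤ α := by
  have hγ := projGradNormSq_nonneg hA e l
  rw [mulVec_smul, smul_dotProduct, dotProduct_smul, projGrad_dotProduct_mulVec_self hA,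
    smul_eq_mul, smul_eq_mul, ← mul_assoc, Real.mul_self_sqrt (div_nonneg hα hγ)]
  rcases hγ.eq_or_lt with hγ0 | hγpos
  · simpa [← hγ0] using hα
  · exact (div_mul_cancel₀ α hγpos.ne').le

theorem dotProduct_smul_projGrad (hA : A.PosDef) (e l : n → ℝ) {α : ℝ} (hα : 0 ≤ α) :
    l ⬝ᵥ (√(α / projGradNormSq A e l) • projGrad A e l) = √(α * projGradNormSq A e l) := by
  have hγ := projGradNormSq_nonneg hA e l
  rw [dotProduct_smul, dotProduct_projGrad hA, smul_eq_mul]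
  nth_rw 2 [← Real.sqrt_mul_self hγ]
  rw [← Real.sqrt_mul (div_nonneg hα hγ)]
  congr 1
  rcases hγ.eq_or_lt with hγ0 | hγpos
  · simp [← hγ0]
  · field_simp

end HyperplaneAscent

theorem add_mem_simplex {d : ℕ} {P z : Fin d → ℝ} (hP : P ∈ simplex d)
    (hz : ∑ i, z i = 0) (hle : ∀ i, -z i ≤ P i) : P + z ∈ simplex d :=
  ⟨fun i => by simpa [neg_le_iff_add_nonneg] using hle i,
    by simp only [Pi.add_apply, Finset.sum_add_distrib, hP.2, hz, add_zero]⟩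

theorem sum_sub_eq_zero_of_mem_simplex {d : ℕ} {P Q : Fin d → ℝ} (hP : P ∈ simplex d)
    (hQ : Q ∈ simplex d) : ∑ i, (Q - P) i = 0 := by
  simp only [Pi.sub_apply, Finset.sum_sub_distrib, hP.2, hQ.2, sub_self]

open Matrix in
theorem stmt_19_general {d : ℕ} (P : Fin d → ℝ) (hP : P ∈ simplexInt d)
    (A : Matrix (Fin d) (Fin d) ℝ) (hA : A.PosDef)
    (l : Fin d → ℝ)
    (α : ℝ) (hα : 0 < α)
    (hsmall : Real.sqrt α <
      Real.sqrt (⨅ i, hA.isHermitian.eigenvalues i) * ⨅ i, min (P i) (1 - P i)) :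
    ∀ e : Fin d → ℝ, e = (fun _ => (1 : ℝ)) →
      ∀ γ : ℝ,
        γ = l ⬝ᵥ A⁻¹ *ᵥ l - (e ⬝ᵥ A⁻¹ *ᵥ l) ^ 2 / (e ⬝ᵥ A⁻¹ *ᵥ e) →
          sSup {y | ∃ P' ∈ simplex d,
              (P' - P) ⬝ᵥ A *ᵥ (P' - P) ≤ α ∧ y = l ⬝ᵥ P'} =
            l ⬝ᵥ (P + Real.sqrt (α / γ) •
              (A⁻¹ *ᵥ l - ((e ⬝ᵥ A⁻¹ *ᵥ l) / (e ⬝ᵥ A⁻¹ *ᵥ e)) • (A⁻¹ *ᵥ e))) := by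
  rintro e he γ rfl
  set z := √(α / projGradNormSq A e l) • projGrad A e l
  change _ = l ⬝ᵥ (P + z)
  have he_dotProduct : ∀ v : Fin d → ℝ, e ⬝ᵥ v = ∑ i, v i := fun v => by
    simp [he, dotProduct]
  have hzA : z ⬝ᵥ A *ᵥ z ≤ α := smul_projGrad_dotProduct_mulVec_le hA e l hα.le
  have hzsum : ∑ i, z i = 0 := by
    rw [← he_dotProduct, dotProduct_smul, dotProduct_projGrad_eq_zero hA, smul_zero]
  have hz_abs_lt : ∀ i, |z i| < P i := fun i => by
    have hPi : ⨅ j, min (P j) (1 - P j) ≤ P i :=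
      (ciInf_le (Set.finite_range _).bddBelow i).trans (min_le_left _ _)
    refine lt_of_mul_lt_mul_left ?_ (Real.sqrt_nonneg (⨅ j, hA.isHermitian.eigenvalues j))
    calc _ ≤ √(z ⬝ᵥ A *ᵥ z) := hA.isHermitian.sqrt_iInf_eigenvalues_mul_abs_le z i
      _ ≤ √α := Real.sqrt_le_sqrt hzA
      _ < _ := hsmall
      _ ≤ _ := mul_le_mul_of_nonneg_left hPi (Real.sqrt_nonneg _)
  have hPsimplex : P ∈ simplex d := ⟨fun i => (hP.1 i).le, hP.2⟩
  refine IsGreatest.csSup_eq ⟨⟨P + z, add_mem_simplex hPsimplex hzsum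
    (fun i => (neg_le_abs (z i)).trans (hz_abs_lt i).le), by simpa using hzA, rfl⟩, ?_⟩
  rintro _ ⟨Q, hQ, hQα, rfl⟩
  have hbound := dotProduct_le_sqrt_mul_projGradNormSq hA e l
    (by rw [he_dotProduct]; exact sum_sub_eq_zero_of_mem_simplex hPsimplex hQ) hQα
  rw [dotProduct_sub] at hbound
  rw [dotProduct_add, dotProduct_smul_projGrad hA e l hα.le]
  linarith

open Matrix in
/-- Linear optimization over the intersection of an ellipsoid and the simplex:
if `A` is symmetric positive definite, `√α < √λ_min(A) · min_i min(P(i), 1-P(i))`,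
`α > 0`, and `l` is not a scalar multiple of `e = (1,…,1)ᵀ`, then
`sup { lᵀP' : P' ∈ 𝒫, (P'-P)ᵀA(P'-P) ≤ α }
  = lᵀ(P + √(α/γ)·(A⁻¹l - (eᵀA⁻¹l / eᵀA⁻¹e)·A⁻¹e))`
with `γ = lᵀA⁻¹l - (eᵀA⁻¹l)²/(eᵀA⁻¹e)`. -/
theorem stmt_19 {d : ℕ} (P : Fin d → ℝ) (hP : P ∈ simplexInt d)
    (A : Matrix (Fin d) (Fin d) ℝ) (hA : A.PosDef)
    (l : Fin d → ℝ) (hl : ¬∃ t : ℝ, l = fun _ => t)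
    (α : ℝ) (hα : 0 < α)
    (hsmall : Real.sqrt α <
      Real.sqrt (⨅ i, hA.isHermitian.eigenvalues i) * ⨅ i, min (P i) (1 - P i)) :
    ∀ e : Fin d → ℝ, e = (fun _ => (1 : ℝ)) →
      ∀ γ : ℝ,
        γ = l ⬝ᵥ A⁻¹ *ᵥ l - (e ⬝ᵥ A⁻¹ *ᵥ l) ^ 2 / (e ⬝ᵥ A⁻¹ *ᵥ e) →
          sSup {y | ∃ P' ∈ simplex d,
              (P' - P) ⬝ᵥ A *ᵥ (P' - P) ≤ α ∧ y = l ⬝ᵥ P'} =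
            l ⬝ᵥ (P + Real.sqrt (α / γ) •
              (A⁻¹ *ᵥ l - ((e ⬝ᵥ A⁻¹ *ᵥ l) / (e ⬝ᵥ A⁻¹ *ᵥ e)) • (A⁻¹ *ᵥ e))) :=
  stmt_19_general P hP A hA l α hα hsmall

end DDO
end
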